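/- arXiv:2004.02075 — 2 statements merged into one kernel-verified Lean document; each statement's English description precedes it below -/
import Mathlib

section
/- Let (R, m) be a complete unramified regular local ring of mixed characteristic and (S, n) its Eisenstein extension S = R[X]/(f(X)) by an Eisenstein polynomial f(X). Let p and p' be prime ideals of R with rad(p + p') = m, and let q and q' be prime ideals of S lying over p and p' respectively (i.e., containing pS and p'S). Then rad(q + q') = n. In particular, if the Huneke–Lyubeznik graph of the minimal primes of an ideal J of R is disconnected, then so is the Huneke–Lyubeznik graph of the minimal primes of JS. -/
/-! The extension `R → S = R[X]/(f)` is finite and free, hence integral and faithful, and `S`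
is local. In an integral extension of local rings every prime containing `mS` lies over `m`,
hence is maximal, so `rad (mS) = n`. If `q ⊇ pS` and `q' ⊇ p'S`, then `q + q'` contracts to an
ideal containing `p + p'`, whose radical is `m`; thus `rad (q + q') ⊇ rad (mS) = n`.

For the graphs, send each minimal prime of `JS` to a minimal prime of `J` below its
contraction. Lying over makes this surjective, and by the first part it sends each edge to an
edge or to a single vertex, so connectedness descends from `JS` to `J`. -/

open IsLocalRing Polynomial

universe u

/-- A Noetherian local ring is *regular* if its maximal ideal can be generated by
`dim R` many elements. -/
def IsRegularLocal (R : Type u) [CommRing R] [IsLocalRing R] : Prop :=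
  IsNoetherianRing R ∧ ∃ s : Finset R, Ideal.span (s : Set R) = maximalIdeal R ∧
    (s.card : WithBot ℕ∞) = ringKrullDim R

/-- The Huneke–Lyubeznik graph of an ideal `J` of a local ring `A`: vertices are the
minimal primes of `J`, and two distinct minimal primes `p`, `q` are adjacent iff
`p + q` is not primary for the maximal ideal (i.e. `rad (p + q) ≠ m`). -/
def hlGraph (A : Type u) [CommRing A] [IsLocalRing A] (J : Ideal A) :
    SimpleGraph ↥J.minimalPrimes :=
  SimpleGraph.fromRel fun P Q => (P.1 + Q.1).radical ≠ maximalIdeal A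

namespace SimpleGraph

variable {V W : Type*} {G : SimpleGraph V} {H : SimpleGraph W}

theorem Preconnected.of_surjective (c : V → W) (hc : Function.Surjective c)
    (hadj : ∀ u v, G.Adj u v → H.Reachable (c u) (c v)) (hG : G.Preconnected) :
    H.Preconnected := by
  simp only [Preconnected, reachable_iff_reflTransGen] at hadj hG ⊢
  exact hc.forall₂.2 fun u v => (hG u v).lift' c hadj

theorem Connected.of_surjective (c : V → W) (hc : Function.Surjective c)
    (hadj : ∀ u v, G.Adj u v → H.Reachable (c u) (c v)) (hG : G.Connected) : H.Connected :=
  have := hG.nonempty.map c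
  ⟨hG.preconnected.of_surjective c hc hadj⟩

end SimpleGraph

theorem hlGraph_adj {A : Type u} [CommRing A] [IsLocalRing A] {J : Ideal A}
    {P Q : J.minimalPrimes} :
    (hlGraph A J).Adj P Q ↔ P ≠ Q ∧ (P.1 + Q.1).radical ≠ maximalIdeal A := by
  rw [hlGraph, SimpleGraph.fromRel_adj, add_comm Q.1, or_self]

section IntegralExtension

variable {R S : Type u} [CommRing R] [CommRing S] [IsLocalRing R] [IsLocalRing S]
  [Algebra R S] [Algebra.IsIntegral R S]

theorem radical_map_maximalIdeal_of_isIntegral :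
    ((maximalIdeal R).map (algebraMap R S)).radical = maximalIdeal S := by
  have hcomap : (maximalIdeal S).comap (algebraMap R S) = maximalIdeal R :=
    eq_maximalIdeal (Ideal.isMaximal_comap_of_isIntegral_of_isMaximal _)
  have hover : ∀ Q : Ideal S, Q.IsPrime → (maximalIdeal R).map (algebraMap R S) ≤ Q →
      Q = maximalIdeal S := by
    intro Q hQ hmQ
    have hQm : Q.comap (algebraMap R S) = maximalIdeal R :=
      ((maximalIdeal.isMaximal R).eq_of_le (Ideal.comap_ne_top _ hQ.ne_top)
        (Ideal.map_le_iff_le_comap.1 hmQ)).symm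
    exact eq_maximalIdeal
      (Ideal.isMaximal_of_isIntegral_of_isMaximal_comap Q (hQm ▸ maximalIdeal.isMaximal R))
  rw [Ideal.radical_eq_sInf]
  refine le_antisymm (sInf_le ⟨Ideal.map_le_iff_le_comap.2 hcomap.ge, inferInstance⟩) ?_
  exact le_sInf fun Q ⟨hmQ, hQ⟩ => (hover Q hQ hmQ).ge

theorem radical_eq_maximalIdeal_of_le_radical_comap {I : Ideal S} (hI : I ≠ ⊤)
    (h : maximalIdeal R ≤ (I.comap (algebraMap R S)).radical) :
    I.radical = maximalIdeal S := by
  refine le_antisymm ((maximalIdeal.isMaximal S).isPrime.radical_le_iff.2 (le_maximalIdeal hI)) ?_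
  calc maximalIdeal S = ((maximalIdeal R).map (algebraMap R S)).radical :=
        radical_map_maximalIdeal_of_isIntegral.symm
    _ ≤ ((I.comap (algebraMap R S)).radical.map (algebraMap R S)).radical :=
        Ideal.radical_mono (Ideal.map_mono h)
    _ ≤ ((I.comap (algebraMap R S)).map (algebraMap R S)).radical.radical :=
        Ideal.radical_mono (Ideal.map_radical_le _)
    _ ≤ I.radical := by
        rw [Ideal.radical_idem]
        exact Ideal.radical_mono Ideal.map_comap_le

theorem radical_add_eq_maximalIdeal_of_map_le {P P' : Ideal R}
    (hP : (P + P').radical = maximalIdeal R) {q q' : Ideal S} (hq : q ≠ ⊤) (hq' : q' ≠ ⊤)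
    (hPq : P.map (algebraMap R S) ≤ q) (hPq' : P'.map (algebraMap R S) ≤ q') :
    (q + q').radical = maximalIdeal S := by
  refine radical_eq_maximalIdeal_of_le_radical_comap ?_ (hP.ge.trans (Ideal.radical_mono ?_))
  · exact ne_top_of_le_ne_top (maximalIdeal.isMaximal S).ne_top
      (sup_le (le_maximalIdeal hq) (le_maximalIdeal hq'))
  · exact sup_le (Ideal.map_le_iff_le_comap.1 (hPq.trans le_sup_left))
      (Ideal.map_le_iff_le_comap.1 (hPq'.trans le_sup_right))

theorem hlGraph_connected_of_connected_map [FaithfulSMul R S] {J : Ideal R}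
    (hJ : (hlGraph S (J.map (algebraMap R S))).Connected) : (hlGraph R J).Connected := by
  have hbelow (q : (J.map (algebraMap R S)).minimalPrimes) :
      ∃ P ∈ J.minimalPrimes, P ≤ q.1.comap (algebraMap R S) :=
    have := q.2.isPrime
    Ideal.exists_minimalPrimes_le (Ideal.map_le_iff_le_comap.1 q.2.le)
  choose c hc hcq using hbelow
  refine hJ.of_surjective (fun q => ⟨c q, hc q⟩) ?_ ?_
  · intro P
    have := P.2.isPrime
    obtain ⟨⟨Q, hQ, hQP⟩⟩ := Ideal.nonempty_primesOver (S := S) P.1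
    obtain ⟨q, hq, hqQ⟩ := Ideal.exists_minimalPrimes_le
      (Ideal.map_le_iff_le_comap.2 (hQP.over ▸ P.2.le))
    have hle : c ⟨q, hq⟩ ≤ P.1 := (hcq _).trans (hQP.over ▸ Ideal.comap_mono hqQ)
    exact ⟨⟨q, hq⟩, Subtype.ext (le_antisymm hle (P.2.2 (hc _).1 hle))⟩
  · intro q q' hqq'
    by_cases heq : (⟨c q, hc q⟩ : J.minimalPrimes) = ⟨c q', hc q'⟩
    · exact heq ▸ SimpleGraph.Reachable.refl _
    refine (hlGraph_adj.2 ⟨heq, fun h => (hlGraph_adj.1 hqq').2 ?_⟩).reachable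
    exact radical_add_eq_maximalIdeal_of_map_le h q.2.isPrime.ne_top q'.2.isPrime.ne_top
      (Ideal.map_le_iff_le_comap.2 (hcq q)) (Ideal.map_le_iff_le_comap.2 (hcq q'))

end IntegralExtension

theorem stmt_7_general (R : Type u) [CommRing R] [IsLocalRing R]
    (f : Polynomial R) (hmonic : f.Monic)
    [IsLocalRing (AdjoinRoot f)] :
    (∀ P P' : Ideal R, P.IsPrime → P'.IsPrime →
        (P + P').radical = maximalIdeal R →
        ∀ q q' : Ideal (AdjoinRoot f), q.IsPrime → q'.IsPrime →
          P.map (algebraMap R (AdjoinRoot f)) ≤ q →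
          P'.map (algebraMap R (AdjoinRoot f)) ≤ q' →
          (q + q').radical = maximalIdeal (AdjoinRoot f)) ∧
      ∀ J : Ideal R, ¬ (hlGraph R J).Connected →
        ¬ (hlGraph (AdjoinRoot f) (J.map (algebraMap R (AdjoinRoot f)))).Connected := by
  have := hmonic.free_adjoinRoot
  have := hmonic.finite_adjoinRoot
  exact ⟨fun _ _ _ _ hP _ _ hq hq' hPq hPq' =>
      radical_add_eq_maximalIdeal_of_map_le hP hq.ne_top hq'.ne_top hPq hPq',
    fun _ hJ hJS => hJ (hlGraph_connected_of_connected_map hJS)⟩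

/-- if `rad (p + p') = m` in `R` and `q ⊇ pS`, `q' ⊇ p'S` are primes of
the Eisenstein extension `S = R[X]/(f)`, then `rad (q + q') = n`; in particular, if the
Huneke–Lyubeznik graph of the minimal primes of `J` is disconnected, so is the
Huneke–Lyubeznik graph of the minimal primes of `JS`. -/
theorem stmt_7 (R : Type u) [CommRing R] [IsLocalRing R] [IsNoetherianRing R]
    [IsAdicComplete (maximalIdeal R) R]
    (p : ℕ) (hp : p.Prime) [CharZero R] (hres : CharP (ResidueField R) p)
    (hunram : (p : R) ∉ (maximalIdeal R) ^ 2)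
    (hreg : IsRegularLocal R)
    (f : Polynomial R) (hmonic : f.Monic) (hdeg : 0 < f.natDegree)
    (hEis : f.IsEisensteinAt (maximalIdeal R))
    [IsLocalRing (AdjoinRoot f)] :
    (∀ P P' : Ideal R, P.IsPrime → P'.IsPrime →
        (P + P').radical = maximalIdeal R →
        ∀ q q' : Ideal (AdjoinRoot f), q.IsPrime → q'.IsPrime →
          P.map (algebraMap R (AdjoinRoot f)) ≤ q →
          P'.map (algebraMap R (AdjoinRoot f)) ≤ q' →
          (q + q').radical = maximalIdeal (AdjoinRoot f)) ∧
      ∀ J : Ideal R, ¬ (hlGraph R J).Connected →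
        ¬ (hlGraph (AdjoinRoot f) (J.map (algebraMap R (AdjoinRoot f)))).Connected :=
  stmt_7_general R f hmonic
end

section
/- Let (R, m) be a complete unramified regular local ring of mixed characteristic and (S, n) its Eisenstein extension S = R[X]/(f(X)). Let p_i and p_j be prime ideals of R such that p_i S and p_j S are prime ideals of S. If rad(p_i S + p_j S) = n, then rad(p_i + p_j) = m. Consequently, if p_i + p_j is not m-primary, then p_i S + p_j S is not n-primary. -/
/-!
`S = R[X]/(f)` is free over `R` since `f` is monic, and nonzero since it is local, hence
faithfully flat. So contracting an extended ideal gives it back, `IS ∩ R = I`, and `R → S` is a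
local homomorphism, so `n ∩ R = m`. Contracting `rad (pᵢS + pⱼS) = rad ((pᵢ + pⱼ)S) = n` to `R` gives
`rad (pᵢ + pⱼ) = m`.
-/

open IsLocalRing Polynomial

universe u

theorem Ideal.radical_eq_maximalIdeal_of_radical_map_eq_maximalIdeal {A B : Type*}
    [CommRing A] [CommRing B] [IsLocalRing A] [IsLocalRing B] [Algebra A B]
    [Module.FaithfullyFlat A B] {I : Ideal A}
    (h : (I.map (algebraMap A B)).radical = maximalIdeal B) :
    I.radical = maximalIdeal A := by
  have := congrArg (Ideal.comap (algebraMap A B)) h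
  rwa [Ideal.comap_radical, Ideal.comap_map_eq_self_of_faithfullyFlat,
    IsLocalRing.maximalIdeal_comap] at this

theorem Polynomial.Monic.faithfullyFlat_adjoinRoot {R : Type*} [CommRing R] {f : R[X]}
    (hf : f.Monic) [Nontrivial (AdjoinRoot f)] : Module.FaithfullyFlat R (AdjoinRoot f) :=
  have := hf.free_adjoinRoot
  inferInstance

theorem stmt_9_general (R : Type u) [CommRing R] [IsLocalRing R]
    (f : Polynomial R) (hmonic : f.Monic)
    [IsLocalRing (AdjoinRoot f)]
    (Pi Pj : Ideal R) :
    ((Pi.map (algebraMap R (AdjoinRoot f)) +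
          Pj.map (algebraMap R (AdjoinRoot f))).radical = maximalIdeal (AdjoinRoot f) →
        (Pi + Pj).radical = maximalIdeal R) ∧
      ((Pi + Pj).radical ≠ maximalIdeal R →
        (Pi.map (algebraMap R (AdjoinRoot f)) +
            Pj.map (algebraMap R (AdjoinRoot f))).radical ≠
          maximalIdeal (AdjoinRoot f)) := by
  have := hmonic.faithfullyFlat_adjoinRoot
  have radical_eq : (Pi.map (algebraMap R (AdjoinRoot f)) +
      Pj.map (algebraMap R (AdjoinRoot f))).radical = maximalIdeal (AdjoinRoot f) →
      (Pi + Pj).radical = maximalIdeal R := fun h ↦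
    Ideal.radical_eq_maximalIdeal_of_radical_map_eq_maximalIdeal (B := AdjoinRoot f) <| by
      rwa [Submodule.add_eq_sup, Ideal.map_sup]
  exact ⟨radical_eq, mt radical_eq⟩

/-- for primes `pᵢ`, `pⱼ` of `R` whose extensions to the Eisenstein
extension `S = R[X]/(f)` are prime, `rad (pᵢS + pⱼS) = n` implies `rad (pᵢ + pⱼ) = m`;
consequently if `pᵢ + pⱼ` is not `m`-primary then `pᵢS + pⱼS` is not `n`-primary. -/
theorem stmt_9 (R : Type u) [CommRing R] [IsLocalRing R] [IsNoetherianRing R]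
    [IsAdicComplete (maximalIdeal R) R]
    (p : ℕ) (hp : p.Prime) [CharZero R] (hres : CharP (ResidueField R) p)
    (hunram : (p : R) ∉ (maximalIdeal R) ^ 2)
    (hreg : IsRegularLocal R)
    (f : Polynomial R) (hmonic : f.Monic) (hdeg : 0 < f.natDegree)
    (hEis : f.IsEisensteinAt (maximalIdeal R))
    [IsLocalRing (AdjoinRoot f)]
    (Pi Pj : Ideal R) (hPi : Pi.IsPrime) (hPj : Pj.IsPrime)
    (hPiS : (Pi.map (algebraMap R (AdjoinRoot f))).IsPrime)
    (hPjS : (Pj.map (algebraMap R (AdjoinRoot f))).IsPrime) :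
    ((Pi.map (algebraMap R (AdjoinRoot f)) +
          Pj.map (algebraMap R (AdjoinRoot f))).radical = maximalIdeal (AdjoinRoot f) →
        (Pi + Pj).radical = maximalIdeal R) ∧
      ((Pi + Pj).radical ≠ maximalIdeal R →
        (Pi.map (algebraMap R (AdjoinRoot f)) +
            Pj.map (algebraMap R (AdjoinRoot f))).radical ≠
          maximalIdeal (AdjoinRoot f)) :=
  stmt_9_general R f hmonic Pi Pj
end
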